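/- The clairvoyant worst-case cost is monotonically non-decreasing in the planning horizon: the maximum eigenvalue of 𝐂_T is less than or equal to the maximum eigenvalue of 𝐂_{T+1}. (Corollary 1, first part.) -/

import Mathlib

/-!
For a disturbance `δ`, `δᵀ 𝐂_T δ = min_u J_T(u, δ)`: completing the square in `u` leaves a
positive semidefinite form in `u` plus a Schur complement, which the Woodbury identity identifies
with `𝐂_T`. If `δ` is a unit eigenvector of `𝐂_T` for `λ`, let `δ₀` be `δ` followed by a zero block
and `u` an optimal horizon-`(T + 1)` input for `δ₀`. Dropping the last input of `u` gives a
horizon-`T` input `u'` whose states are the first `T + 1` states of `(u, δ₀)`, and the dropped stage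
has nonnegative cost, so `λ ≤ J_T(u', δ) ≤ J_{T+1}(u, δ₀) = δ₀ᵀ 𝐂_{T+1} δ₀ ≤ λ_max(𝐂_{T+1})`.
-/

open Matrix

noncomputable section

/-- Index type for stacked state / disturbance trajectories over horizon `T`:
block index in `Fin (T+1)`, coordinate in `Fin n`. -/
abbrev SIdx (n T : ℕ) := Fin (T + 1) × Fin n

/-- Index type for stacked input trajectories over horizon `T`. -/
abbrev UIdx (m T : ℕ) := Fin T × Fin m

/-- The block-downshift operator `𝐙`. -/
def Zshift (n T : ℕ) : Matrix (SIdx n T) (SIdx n T) ℝ :=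
  Matrix.of fun p q => if (p.1 : ℕ) = (q.1 : ℕ) + 1 ∧ p.2 = q.2 then (1 : ℝ) else 0

/-- `𝐀 = I_{T+1} ⊗ A`. -/
def bigA (n T : ℕ) (A : Matrix (Fin n) (Fin n) ℝ) : Matrix (SIdx n T) (SIdx n T) ℝ :=
  Matrix.of fun p q => if p.1 = q.1 then A p.2 q.2 else 0

/-- `𝐁 = col(I_T ⊗ B, 0)`. -/
def bigB (n m T : ℕ) (B : Matrix (Fin n) (Fin m) ℝ) : Matrix (SIdx n T) (UIdx m T) ℝ :=
  Matrix.of fun p q => if (p.1 : ℕ) = (q.1 : ℕ) then B p.2 q.2 else 0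

/-- `𝐐 = blkdiag(I_T ⊗ Q, 0)`. -/
def bigQ (n T : ℕ) (Q : Matrix (Fin n) (Fin n) ℝ) : Matrix (SIdx n T) (SIdx n T) ℝ :=
  Matrix.of fun p q => if p.1 = q.1 ∧ (p.1 : ℕ) < T then Q p.2 q.2 else 0

/-- `𝐑 = I_T ⊗ R`. -/
def bigR (m T : ℕ) (R : Matrix (Fin m) (Fin m) ℝ) : Matrix (UIdx m T) (UIdx m T) ℝ :=
  Matrix.of fun p q => if p.1 = q.1 then R p.2 q.2 else 0

/-- `𝐅 = (I − 𝐙𝐀)⁻¹𝐙𝐁`. -/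
def bigF (n m T : ℕ) (A : Matrix (Fin n) (Fin n) ℝ) (B : Matrix (Fin n) (Fin m) ℝ) :
    Matrix (SIdx n T) (UIdx m T) ℝ :=
  (1 - Zshift n T * bigA n T A)⁻¹ * (Zshift n T * bigB n m T B)

/-- `𝐆 = (I − 𝐙𝐀)⁻¹`. -/
def bigG (n T : ℕ) (A : Matrix (Fin n) (Fin n) ℝ) : Matrix (SIdx n T) (SIdx n T) ℝ :=
  (1 - Zshift n T * bigA n T A)⁻¹

/-- The control cost `J_T(u, δ) = xᵀ𝐐x + uᵀ𝐑u` with `x = 𝐅u + 𝐆δ`. -/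
def costJ (n m T : ℕ) (A : Matrix (Fin n) (Fin n) ℝ) (B : Matrix (Fin n) (Fin m) ℝ)
    (Q : Matrix (Fin n) (Fin n) ℝ) (R : Matrix (Fin m) (Fin m) ℝ)
    (u : UIdx m T → ℝ) (δ : SIdx n T → ℝ) : ℝ :=
  let x := bigF n m T A B *ᵥ u + bigG n T A *ᵥ δ
  x ⬝ᵥ (bigQ n T Q *ᵥ x) + u ⬝ᵥ (bigR m T R *ᵥ u)

/-- `𝐏 = 𝐑 + 𝐅ᵀ𝐐𝐅`. -/
def bigP (n m T : ℕ) (A : Matrix (Fin n) (Fin n) ℝ) (B : Matrix (Fin n) (Fin m) ℝ)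
    (Q : Matrix (Fin n) (Fin n) ℝ) (R : Matrix (Fin m) (Fin m) ℝ) :
    Matrix (UIdx m T) (UIdx m T) ℝ :=
  bigR m T R + (bigF n m T A B)ᵀ * bigQ n T Q * bigF n m T A B

/-- The clairvoyant cost matrix `𝐂_T = 𝐆ᵀ𝐐(I + 𝐅𝐑⁻¹𝐅ᵀ𝐐)⁻¹𝐆`. -/
def Cmat (n m T : ℕ) (A : Matrix (Fin n) (Fin n) ℝ) (B : Matrix (Fin n) (Fin m) ℝ)
    (Q : Matrix (Fin n) (Fin n) ℝ) (R : Matrix (Fin m) (Fin m) ℝ) :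
    Matrix (SIdx n T) (SIdx n T) ℝ :=
  (bigG n T A)ᵀ * bigQ n T Q *
    (1 + bigF n m T A B * (bigR m T R)⁻¹ * (bigF n m T A B)ᵀ * bigQ n T Q)⁻¹ * bigG n T A

/-- Assemble `δ = col(x₀, w₀, …, w_{T−1})`. -/
def assemble (n T : ℕ) (x0 : Fin n → ℝ) (w : Fin T × Fin n → ℝ) : SIdx n T → ℝ :=
  fun p => if h : (p.1 : ℕ) = 0 then x0 p.2
    else w (⟨(p.1 : ℕ) - 1, by have := p.1.isLt; omega⟩, p.2)

lemma mulVec_dotProduct {ι κ : Type*} [Fintype ι] [Fintype κ] (M : Matrix ι κ ℝ) (x : κ → ℝ)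
    (y : ι → ℝ) : (M *ᵥ x) ⬝ᵥ y = x ⬝ᵥ (Mᵀ *ᵥ y) :=
  (dotProduct_comm _ _).trans (dotProduct_transpose_mulVec M x y).symm

section LinearQuadratic

variable {ι κ ν : Type*} [Fintype ι] [Fintype κ]
  (F : Matrix ι κ ℝ) (G : Matrix ι ν ℝ) (Q : Matrix ι ι ℝ) (R : Matrix κ κ ℝ)

variable {Q R} in
lemma posDef_add_transpose_mul_mul (hQ : Q.PosSemidef) (hR : R.PosDef) :
    (R + Fᵀ * Q * F).PosDef := by
  simpa [conjTranspose_eq_transpose_of_trivial] using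
    hR.add_posSemidef (hQ.conjTranspose_mul_mul_same F)

variable [DecidableEq ι] [DecidableEq κ]

def lqCostMatrix : Matrix ν ν ℝ :=
  Gᵀ * Q * (1 + F * R⁻¹ * Fᵀ * Q)⁻¹ * G

variable {Q R} in
lemma lqCostMatrix_eq (hQ : Q.PosSemidef) (hR : R.PosDef) :
    lqCostMatrix F G Q R =
      Gᵀ * Q * G - (Fᵀ * Q * G)ᵀ * (R + Fᵀ * Q * F)⁻¹ * (Fᵀ * Q * G) := by
  have hRdet := (isUnit_iff_isUnit_det R).1 hR.isUnit
  have woodbury := add_mul_mul_inv_eq_sub 1 F R⁻¹ (Fᵀ * Q) isUnit_one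
    (isUnit_nonsing_inv_iff.2 hR.isUnit)
    (by simpa [nonsing_inv_nonsing_inv _ hRdet, Matrix.mul_assoc] using
      (posDef_add_transpose_mul_mul F hQ hR).isUnit)
  simp only [inv_one, Matrix.one_mul, Matrix.mul_one, nonsing_inv_nonsing_inv _ hRdet] at woodbury
  rw [lqCostMatrix, Matrix.mul_assoc (F * R⁻¹), woodbury, transpose_mul, transpose_mul,
    transpose_transpose, (isHermitian_iff_isSymm.1 hQ.isHermitian).eq]
  simp only [Matrix.mul_sub, Matrix.sub_mul, Matrix.mul_one, Matrix.mul_assoc]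

variable [Fintype ν]

/-- `costJ` and `Cmat` are, by definition, `lqCost` and `lqCostMatrix` of `𝐅, 𝐆, 𝐐, 𝐑`. -/
def lqCost (u : κ → ℝ) (δ : ν → ℝ) : ℝ :=
  let x := F *ᵥ u + G *ᵥ δ
  x ⬝ᵥ (Q *ᵥ x) + u ⬝ᵥ (R *ᵥ u)

variable {Q R}

theorem lqCost_eq (hQ : Q.PosSemidef) (hR : R.PosDef) (u : κ → ℝ) (δ : ν → ℝ) :
    lqCost F G Q R u δ =
      (u + ((R + Fᵀ * Q * F)⁻¹ * (Fᵀ * Q * G)) *ᵥ δ) ⬝ᵥ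
        ((R + Fᵀ * Q * F) *ᵥ (u + ((R + Fᵀ * Q * F)⁻¹ * (Fᵀ * Q * G)) *ᵥ δ)) +
      δ ⬝ᵥ (lqCostMatrix F G Q R *ᵥ δ) := by
  have hQ_symm := (isHermitian_iff_isSymm.1 hQ.isHermitian).eq
  have hP := posDef_add_transpose_mul_mul F hQ hR
  have hblocks : lqCost F G Q R u δ = (u ⊕ᵥ δ) ᵥ*
      fromBlocks (R + Fᵀ * Q * F) (Fᵀ * Q * G) (Fᵀ * Q * G)ᵀ (Gᵀ * Q * G) ⬝ᵥ (u ⊕ᵥ δ) := by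
    simp only [lqCost, vecMul_fromBlocks, sumElim_dotProduct_sumElim, Sum.elim_comp_inl,
      Sum.elim_comp_inr, ← dotProduct_mulVec, mulVec_add, add_dotProduct, dotProduct_add,
      add_mulVec, mulVec_dotProduct, transpose_mul, hQ_symm, transpose_transpose, ← mulVec_mulVec]
    ring
  have := hP.isUnit.invertible
  rw [hblocks, lqCostMatrix_eq F G hQ hR]
  simpa [conjTranspose_eq_transpose_of_trivial, dotProduct_mulVec] using
    schur_complement_eq₁₁ (Fᵀ * Q * G) (Gᵀ * Q * G) u δ hP.isHermitian

theorem dotProduct_lqCostMatrix_mulVec_le (hQ : Q.PosSemidef) (hR : R.PosDef) (u : κ → ℝ)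
    (δ : ν → ℝ) : δ ⬝ᵥ (lqCostMatrix F G Q R *ᵥ δ) ≤ lqCost F G Q R u δ := by
  rw [lqCost_eq F G hQ hR]
  exact le_add_of_nonneg_left
    ((posDef_add_transpose_mul_mul F hQ hR).posSemidef.dotProduct_mulVec_nonneg _)

theorem exists_lqCost_eq (hQ : Q.PosSemidef) (hR : R.PosDef) (δ : ν → ℝ) :
    ∃ u, lqCost F G Q R u δ = δ ⬝ᵥ (lqCostMatrix F G Q R *ᵥ δ) :=
  ⟨-(((R + Fᵀ * Q * F)⁻¹ * (Fᵀ * Q * G)) *ᵥ δ), by simp [lqCost_eq F G hQ hR]⟩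

end LinearQuadratic

section Rayleigh

variable {ι : Type*} [Fintype ι] [DecidableEq ι] {C : Matrix ι ι ℝ}

lemma Matrix.IsHermitian.exists_dotProduct_mulVec_eq_eigenvalues (hC : C.IsHermitian) (i : ι) :
    ∃ v : ι → ℝ, v ⬝ᵥ v = 1 ∧ v ⬝ᵥ (C *ᵥ v) = hC.eigenvalues i := by
  refine ⟨hC.eigenvectorBasis i, ?_, by simpa using (hC.eigenvalues_eq i).symm⟩
  have := hC.eigenvectorBasis.inner_eq_one i
  rwa [EuclideanSpace.inner_eq_star_dotProduct, star_trivial] at this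

lemma Matrix.IsHermitian.dotProduct_mulVec_le_iSup_eigenvalues_mul (hC : C.IsHermitian)
    (x : ι → ℝ) : x ⬝ᵥ (C *ᵥ x) ≤ (⨆ i, hC.eigenvalues i) * (x ⬝ᵥ x) := by
  set b := hC.eigenvectorBasis
  have parseval (y : ι → ℝ) : ∑ i, (b i ⬝ᵥ x) * (b i ⬝ᵥ y) = x ⬝ᵥ y := by
    simpa [EuclideanSpace.inner_eq_star_dotProduct, dotProduct_comm] using
      b.sum_inner_mul_inner (WithLp.toLp 2 x) (WithLp.toLp 2 y)
  have eigen (i : ι) : b i ⬝ᵥ (C *ᵥ x) = hC.eigenvalues i * (b i ⬝ᵥ x) := by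
    rw [← dotProduct_transpose_mulVec, (isHermitian_iff_isSymm.1 hC).eq,
      hC.mulVec_eigenvectorBasis, dotProduct_smul, smul_eq_mul, dotProduct_comm]
  calc x ⬝ᵥ (C *ᵥ x) = ∑ i, hC.eigenvalues i * (b i ⬝ᵥ x) ^ 2 := by
        rw [← parseval]
        exact Finset.sum_congr rfl fun i _ => by rw [eigen]; ring
    _ ≤ ∑ i, (⨆ j, hC.eigenvalues j) * (b i ⬝ᵥ x) ^ 2 := by
        gcongr with i
        exact le_ciSup (Set.finite_range _).bddAbove i
    _ = (⨆ i, hC.eigenvalues i) * (x ⬝ᵥ x) := by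
        simp only [← Finset.mul_sum, ← parseval, sq]

end Rayleigh

section Horizon

variable {n m : ℕ}

lemma Zshift_mul_apply_zero {κ : Type*} {L : ℕ} (M : Matrix (SIdx n L) κ ℝ) (i : Fin n) (q : κ) :
    (Zshift n L * M) (0, i) q = 0 := by
  simp [Zshift, Matrix.mul_apply]

lemma Zshift_mul_apply_succ {κ : Type*} {L : ℕ} (M : Matrix (SIdx n L) κ ℝ) (s : Fin L)
    (i : Fin n) (q : κ) : (Zshift n L * M) (s.succ, i) q = M (s.castSucc, i) q := by
  rw [Matrix.mul_apply, Fintype.sum_eq_single (s.castSucc, i)]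
  · simp [Zshift]
  · rintro ⟨t, j⟩ h
    simp only [Zshift, of_apply, Fin.val_succ, ite_mul, one_mul, zero_mul, ite_eq_right_iff]
    rintro ⟨hts, rfl⟩
    have hts : t = s.castSucc := Fin.ext (by simp only [Fin.val_castSucc]; omega)
    exact absurd (congrArg (·, i) hts) h

lemma mul_Zshift_apply_castSucc {ι : Type*} {L : ℕ} (M : Matrix ι (SIdx n L) ℝ) (p : ι)
    (s : Fin L) (j : Fin n) : (M * Zshift n L) p (s.castSucc, j) = M p (s.succ, j) := by
  rw [Matrix.mul_apply, Fintype.sum_eq_single (s.succ, j)]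
  · simp [Zshift]
  · rintro ⟨t, k⟩ h
    simp only [Zshift, of_apply, Fin.val_castSucc, mul_ite, mul_one, mul_zero, ite_eq_right_iff]
    rintro ⟨hts, rfl⟩
    have hts : t = s.succ := Fin.ext (by simp only [Fin.val_succ]; omega)
    exact absurd (congrArg (·, k) hts) h

lemma bigA_mul_apply {κ : Type*} {L : ℕ} (A : Matrix (Fin n) (Fin n) ℝ)
    (M : Matrix (SIdx n L) κ ℝ) (p : SIdx n L) (q : κ) :
    (bigA n L A * M) p q = ∑ j, A p.2 j * M (p.1, j) q := by
  simp [bigA, Matrix.mul_apply, Fintype.sum_prod_type]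

lemma mul_bigB_apply {ι : Type*} {L : ℕ} (B : Matrix (Fin n) (Fin m) ℝ)
    (M : Matrix ι (SIdx n L) ℝ) (p : ι) (r : UIdx m L) :
    (M * bigB n m L B) p r = ∑ j, M p (r.1.castSucc, j) * B j r.2 := by
  rw [Matrix.mul_apply, Fintype.sum_prod_type, Fintype.sum_eq_single r.1.castSucc]
  · simp [bigB]
  · intro t ht
    simp only [bigB, of_apply, mul_ite, mul_zero]
    exact Finset.sum_eq_zero fun j _ => if_neg fun h => ht (Fin.ext h)

variable (A : Matrix (Fin n) (Fin n) ℝ) (B : Matrix (Fin n) (Fin m) ℝ)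

def transitionMatrix (L : ℕ) : Matrix (SIdx n L) (SIdx n L) ℝ :=
  of fun p q => if (q.1 : ℕ) ≤ p.1 then (A ^ ((p.1 : ℕ) - q.1)) p.2 q.2 else 0

lemma one_sub_Zshift_mul_bigA_mul_transitionMatrix (L : ℕ) :
    (1 - Zshift n L * bigA n L A) * transitionMatrix A L = 1 := by
  ext ⟨s, i⟩ ⟨t, j⟩
  rw [Matrix.sub_mul, Matrix.one_mul, Matrix.mul_assoc, Matrix.sub_apply]
  induction s using Fin.cases with
  | zero =>
    rw [Zshift_mul_apply_zero]
    by_cases ht : (t : ℕ) = 0 <;>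
      simp [transitionMatrix, ht, Matrix.one_apply, Prod.ext_iff, Fin.ext_iff, eq_comm]
  | succ s =>
    rw [Zshift_mul_apply_succ, bigA_mul_apply]
    simp only [transitionMatrix, of_apply, Fin.val_succ, Fin.val_castSucc, mul_ite, mul_zero,
      Finset.sum_ite_irrel]
    rw [← Matrix.mul_apply, ← pow_succ']
    rcases lt_trichotomy (t : ℕ) (s + 1) with h | h | h
    · have hts : (t : ℕ) ≤ s := by omega
      simp [hts, h.le, Fin.ext_iff, h.ne', Nat.sub_add_comm hts]
    · simp [h, Matrix.one_apply, Fin.ext_iff]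
    · simp [show ¬ (t : ℕ) ≤ s + 1 by omega, show ¬ (t : ℕ) ≤ s by omega, h.ne, Fin.ext_iff]

lemma bigG_eq_transitionMatrix (L : ℕ) : bigG n L A = transitionMatrix A L :=
  inv_eq_right_inv (one_sub_Zshift_mul_bigA_mul_transitionMatrix A L)

lemma bigG_castSucc_castSucc {L : ℕ} (t s : Fin (L + 1)) (i j : Fin n) :
    bigG n (L + 1) A (t.castSucc, i) (s.castSucc, j) = bigG n L A (t, i) (s, j) := by
  simp [bigG_eq_transitionMatrix, transitionMatrix]

lemma bigG_castSucc_last {L : ℕ} (t : Fin (L + 1)) (i j : Fin n) :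
    bigG n (L + 1) A (t.castSucc, i) (Fin.last (L + 1), j) = 0 := by
  simp [bigG_eq_transitionMatrix, transitionMatrix]

lemma bigF_apply {L : ℕ} (p : SIdx n L) (r : UIdx m L) :
    bigF n m L A B p r = ∑ j, bigG n L A p (r.1.succ, j) * B j r.2 := by
  rw [show bigF n m L A B = bigG n L A * Zshift n L * bigB n m L B from
      (Matrix.mul_assoc ..).symm, mul_bigB_apply]
  simp only [mul_Zshift_apply_castSucc]

lemma bigF_castSucc_castSucc {L : ℕ} (t : Fin (L + 1)) (r : Fin L) (i : Fin n) (k : Fin m) :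
    bigF n m (L + 1) A B (t.castSucc, i) (r.castSucc, k) = bigF n m L A B (t, i) (r, k) := by
  rw [bigF_apply, bigF_apply, Fin.succ_castSucc]
  simp only [bigG_castSucc_castSucc]

lemma bigF_castSucc_last {L : ℕ} (t : Fin (L + 1)) (i : Fin n) (k : Fin m) :
    bigF n m (L + 1) A B (t.castSucc, i) (Fin.last L, k) = 0 := by
  simp [bigF_apply, bigG_castSucc_last]

def padState {T : ℕ} (δ : SIdx n T → ℝ) : SIdx n (T + 1) → ℝ :=
  fun p => Fin.lastCases 0 (fun s => δ (s, p.2)) p.1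

def truncInput {T : ℕ} (u : UIdx m (T + 1) → ℝ) : UIdx m T → ℝ :=
  fun r => u (r.1.castSucc, r.2)

lemma padState_dotProduct_padState {T : ℕ} (δ : SIdx n T → ℝ) :
    padState δ ⬝ᵥ padState δ = δ ⬝ᵥ δ := by
  simp [padState, dotProduct, Fintype.sum_prod_type, Fin.sum_univ_castSucc]

lemma bigG_mulVec_padState {T : ℕ} (δ : SIdx n T → ℝ) (t : Fin (T + 1)) (i : Fin n) :
    (bigG n (T + 1) A *ᵥ padState δ) (t.castSucc, i) = (bigG n T A *ᵥ δ) (t, i) := by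
  simp [mulVec, dotProduct, Fintype.sum_prod_type, Fin.sum_univ_castSucc, padState,
    bigG_castSucc_castSucc]

lemma bigF_mulVec_castSucc {T : ℕ} (u : UIdx m (T + 1) → ℝ) (t : Fin (T + 1)) (i : Fin n) :
    (bigF n m (T + 1) A B *ᵥ u) (t.castSucc, i) = (bigF n m T A B *ᵥ truncInput u) (t, i) := by
  simp [mulVec, dotProduct, Fintype.sum_prod_type, Fin.sum_univ_castSucc, truncInput,
    bigF_castSucc_castSucc, bigF_castSucc_last]

variable {A B} (Q : Matrix (Fin n) (Fin n) ℝ) (R : Matrix (Fin m) (Fin m) ℝ)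

open scoped Kronecker in
lemma bigQ_eq_kronecker {L : ℕ} :
    bigQ n L Q = diagonal (fun s : Fin (L + 1) => if (s : ℕ) < L then (1 : ℝ) else 0) ⊗ₖ Q := by
  ext ⟨s, i⟩ ⟨t, j⟩
  by_cases h : s = t <;> simp [bigQ, diagonal, h]

open scoped Kronecker in
lemma bigR_eq_kronecker {L : ℕ} : bigR m L R = (1 : Matrix (Fin L) (Fin L) ℝ) ⊗ₖ R := by
  ext ⟨s, i⟩ ⟨t, j⟩
  by_cases h : s = t <;> simp [bigR, one_apply, h]

variable {Q R}

lemma bigQ_posSemidef {L : ℕ} (hQ : Q.PosSemidef) : (bigQ n L Q).PosSemidef := by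
  rw [bigQ_eq_kronecker]
  refine PosSemidef.kronecker (posSemidef_diagonal_iff.2 fun s => ?_) hQ
  split_ifs <;> norm_num

lemma bigR_posDef {L : ℕ} (hR : R.PosDef) : (bigR m L R).PosDef := by
  rw [bigR_eq_kronecker]
  exact PosDef.one.kronecker hR

lemma dotProduct_bigQ_mulVec {L : ℕ} (x : SIdx n L → ℝ) :
    x ⬝ᵥ (bigQ n L Q *ᵥ x) =
      ∑ t : Fin L, Function.curry x t.castSucc ⬝ᵥ (Q *ᵥ Function.curry x t.castSucc) := by
  simp [bigQ, dotProduct, mulVec, Fintype.sum_prod_type, Fin.sum_univ_castSucc]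

lemma dotProduct_bigR_mulVec {L : ℕ} (u : UIdx m L → ℝ) :
    u ⬝ᵥ (bigR m L R *ᵥ u) = ∑ t, Function.curry u t ⬝ᵥ (R *ᵥ Function.curry u t) := by
  simp [bigR, dotProduct, mulVec, Fintype.sum_prod_type]

lemma costJ_truncInput_le (hQ : Q.PosSemidef) (hR : R.PosSemidef) {T : ℕ}
    (u : UIdx m (T + 1) → ℝ) (δ : SIdx n T → ℝ) :
    costJ n m T A B Q R (truncInput u) δ ≤ costJ n m (T + 1) A B Q R u (padState δ) := by
  have hstate (t : Fin (T + 1)) :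
      Function.curry (bigF n m (T + 1) A B *ᵥ u + bigG n (T + 1) A *ᵥ padState δ) t.castSucc =
        Function.curry (bigF n m T A B *ᵥ truncInput u + bigG n T A *ᵥ δ) t := by
    ext i
    simp [bigF_mulVec_castSucc, bigG_mulVec_padState]
  simp only [costJ, dotProduct_bigQ_mulVec, dotProduct_bigR_mulVec,
    Fin.sum_univ_castSucc (n := T), hstate]
  gcongr ?_ + ?_
  · exact le_add_of_nonneg_right (by simpa using hQ.dotProduct_mulVec_nonneg _)
  · exact le_add_of_nonneg_right (by simpa using hR.dotProduct_mulVec_nonneg _)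

end Horizon

theorem stmt8_general (n m T : ℕ) (hn : 0 < n)
    (A : Matrix (Fin n) (Fin n) ℝ) (B : Matrix (Fin n) (Fin m) ℝ)
    (Q : Matrix (Fin n) (Fin n) ℝ) (R : Matrix (Fin m) (Fin m) ℝ)
    (hQ : Q.PosSemidef) (hR : R.PosDef)
    (hCT : (Cmat n m T A B Q R).IsHermitian)
    (hCT1 : (Cmat n m (T + 1) A B Q R).IsHermitian) :
    (⨆ i : SIdx n T, hCT.eigenvalues i) ≤ ⨆ i : SIdx n (T + 1), hCT1.eigenvalues i := by
  have : Nonempty (Fin n) := ⟨⟨0, hn⟩⟩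
  refine ciSup_le fun i => ?_
  obtain ⟨v, hv_unit, hv⟩ := hCT.exists_dotProduct_mulVec_eq_eigenvalues i
  obtain ⟨u, hu⟩ := exists_lqCost_eq (bigF n m (T + 1) A B) (bigG n (T + 1) A)
    (bigQ_posSemidef hQ) (bigR_posDef hR) (padState v)
  calc hCT.eigenvalues i = v ⬝ᵥ (Cmat n m T A B Q R *ᵥ v) := hv.symm
    _ ≤ costJ n m T A B Q R (truncInput u) v :=
      dotProduct_lqCostMatrix_mulVec_le _ _ (bigQ_posSemidef hQ) (bigR_posDef hR) _ _
    _ ≤ costJ n m (T + 1) A B Q R u (padState v) := costJ_truncInput_le hQ hR.posSemidef u v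
    _ = padState v ⬝ᵥ (Cmat n m (T + 1) A B Q R *ᵥ padState v) := hu
    _ ≤ (⨆ j, hCT1.eigenvalues j) * (padState v ⬝ᵥ padState v) :=
      hCT1.dotProduct_mulVec_le_iSup_eigenvalues_mul _
    _ = ⨆ j, hCT1.eigenvalues j := by rw [padState_dotProduct_padState, hv_unit, mul_one]

/-- Corollary 1, first part: the maximum eigenvalue of `𝐂_T` is monotonically
non-decreasing in the planning horizon. -/
theorem stmt8 (n m T : ℕ) (hn : 0 < n) (hm : 0 < m) (hT : 1 ≤ T)
    (A : Matrix (Fin n) (Fin n) ℝ) (B : Matrix (Fin n) (Fin m) ℝ)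
    (Q : Matrix (Fin n) (Fin n) ℝ) (R : Matrix (Fin m) (Fin m) ℝ)
    (hQ : Q.PosSemidef) (hR : R.PosDef)
    (hCT : (Cmat n m T A B Q R).IsHermitian)
    (hCT1 : (Cmat n m (T + 1) A B Q R).IsHermitian) :
    (⨆ i : SIdx n T, hCT.eigenvalues i) ≤ ⨆ i : SIdx n (T + 1), hCT1.eigenvalues i :=
  stmt8_general n m T hn A B Q R hQ hR hCT hCT1

end
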